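/- In the setting of Theorem 1, every element x of X = G *_{⟨z_G = z_H⟩} H admits a standard factorization x = r p_1 q_1 ⋯ p_l q_l, where r, q_1,...,q_l ∈ H, each p_i lies in the subsemigroup PX generated by {x_1,...,x_m}, q_i >_H 1 for i ≠ l, q_l ≥_H 1, and no q_i is a positive power of z_H. -/

import Mathlib

/-!
The element `ιG zG = ιH zH` of `X` commutes with `ιG (g i)` because `zG` is central, and with
`ιH (h 0)` because `h 0` is the least positive element of `H` and conjugation by `zH` is an order
automorphism of `H` (right `zH`-invariance). Hence it commutes with every
`x i = ιG (g i) * ιH (zH⁻¹ * h 0)` and with all of `PX`. The set of elements with a standard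
factorization contains `1` and is stable under left multiplication by `ιH a` (absorbed into `r`)
and by `p ∈ PX`: if `r` is a power of `zH` it moves past `p`, which joins the first block;
otherwise cofinality of `zH` gives `k` with `zH ^ k * r > 1`, and `r = zH ^ (-k) * (zH ^ k * r)`
opens a new block. It is also stable under `(x i)⁻¹ = ιH (h 0)⁻¹ * ιG (zG * (g i)⁻¹)`, since
`zG * (g i)⁻¹ > 1` is a product of the `ιG (g j) = x j * ιH ((h 0)⁻¹ * zH)`. As `ιH H` and the
`x i` generate `X`, every element is covered.
-/

/-- `P` is the positive cone of a left ordering of `G`. -/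
def IsLeftOrderPositiveCone {G : Type} [Group G] (P : Set G) : Prop :=
  ∃ r : G → G → Prop, IsStrictTotalOrder G r ∧
    (∀ a b c : G, r a b → r (c * a) (c * b)) ∧ P = {g : G | r 1 g}

/-- `X`, together with `ιG` and `ιH`, is the amalgamated free product
`G *_{⟨zG = zH⟩} H`, characterized by its universal property. -/
structure IsAmalgamatedProduct {G H X : Type} [Group G] [Group H] [Group X]
    (zG : G) (zH : H) (ιG : G →* X) (ιH : H →* X) : Prop where
  eq : ιG zG = ιH zH
  ind : ∀ {K : Type} [Group K] (f : G →* K) (f' : H →* K), f zG = f' zH →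
      ∃! φ : X →* K, φ.comp ιG = f ∧ φ.comp ιH = f'

theorem strictMono_mul_right_pow {M : Type*} [Monoid M] [Preorder M] {z : M}
    (hz : StrictMono (· * z)) (n : ℕ) : StrictMono (· * z ^ n) := by
  simpa only [mul_right_iterate] using hz.iterate n

theorem strictMono_mul_right_inv {H : Type*} [Group H] [LinearOrder H] {z : H}
    (hz : StrictMono (· * z)) : StrictMono (· * z⁻¹) :=
  fun a b hab => hz.lt_iff_lt.mp (by simpa using hab)

section LeftOrdered

variable {H : Type*} [Group H] [LinearOrder H] [MulLeftStrictMono H] {S : Set H}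

theorem not_isOfFinOrder_of_one_lt {z : H} (hz : 1 < z) : ¬IsOfFinOrder z := by
  have := mulLeftMono_of_mulLeftStrictMono H
  rintro hfin
  obtain ⟨N, hN, hzN⟩ := isOfFinOrder_iff_pow_eq_one.mp hfin
  exact (one_lt_pow' hz hN.ne').ne' hzN

theorem one_lt_mul_mul_inv {w b : H} (hw : StrictMono (· * w⁻¹)) (hb : 1 < b) :
    1 < w * b * w⁻¹ := by
  simpa using hw (lt_mul_of_one_lt_right' w hb)

theorem commute_of_isLeast_one_lt {m z : H} (hm : IsLeast {a | 1 < a} m)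
    (hz : StrictMono (· * z)) : Commute z m := by
  have := mulLeftMono_of_mulLeftStrictMono H
  have hz' := strictMono_mul_right_inv hz
  have h₁ : m ≤ z * m * z⁻¹ := hm.2 (one_lt_mul_mul_inv hz' hm.1)
  have h₂ : m ≤ z⁻¹ * m * z :=
    hm.2 (by simpa using one_lt_mul_mul_inv (w := z⁻¹) (by simpa using hz) hm.1)
  have h₃ : z * m * z⁻¹ ≤ m := by
    simpa [mul_assoc] using hz'.monotone (mul_le_mul_right h₂ z)
  exact mul_inv_eq_iff_eq_mul.mp (le_antisymm h₃ h₁)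

theorem isLeast_one_lt_of_forall_le {m : H}
    (hcone : {a : H | 1 < a} ⊆ (Subsemigroup.closure S : Set H)) (hm : 1 < m)
    (hmS : ∀ s ∈ S, m ≤ s) : IsLeast {a | 1 < a} m := by
  refine ⟨hm, fun a ha => ?_⟩
  have hmem := hcone ha
  clear ha
  induction hmem using Subsemigroup.closure_induction with
  | mem s hs => exact hmS s hs
  | mul b c _ _ hb hc => exact hb.trans (lt_mul_of_one_lt_right' b (hm.trans_le hc)).le

theorem exists_lt_pow_of_forall_lt {z : H}
    (hcone : {a : H | 1 < a} ⊆ (Subsemigroup.closure S : Set H))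
    (hS : ∀ s ∈ S, s < z) (hz : StrictMono (· * z)) (hz₁ : 1 < z) (a : H) :
    ∃ k : ℕ, a < z ^ k := by
  rcases le_or_gt a 1 with ha | ha
  · exact ⟨1, ha.trans_lt (by simpa using hz₁)⟩
  have hmem := hcone ha
  clear ha
  induction hmem using Subsemigroup.closure_induction with
  | mem s hs => exact ⟨1, by simpa using hS s hs⟩
  | mul b c _ _ hb hc =>
    obtain ⟨j, hj⟩ := hb
    obtain ⟨k, hk⟩ := hc
    refine ⟨j + k, ?_⟩
    calc b * c < b * z ^ k := mul_lt_mul_right hk b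
      _ < z ^ j * z ^ k := strictMono_mul_right_pow hz k hj
      _ = z ^ (j + k) := (pow_add z j k).symm

theorem exists_one_lt_pow_mul {z : H} (hcof : ∀ a : H, ∃ k : ℕ, a < z ^ k)
    (hz : StrictMono (· * z)) (u : H) : ∃ k : ℕ, 1 < z ^ k * u := by
  obtain ⟨k, hk⟩ := hcof u⁻¹
  have h : 1 < u * z ^ k := by simpa using mul_lt_mul_right hk u
  refine ⟨k, ?_⟩
  simpa [mul_assoc] using
    one_lt_mul_mul_inv (strictMono_mul_right_inv (strictMono_mul_right_pow hz k)) h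

theorem Subgroup.closure_eq_top_of_one_lt_subset
    (hcone : {a : H | 1 < a} ⊆ (Subsemigroup.closure S : Set H)) : Subgroup.closure S = ⊤ := by
  have hpos : ∀ a : H, 1 < a → a ∈ Subgroup.closure S := fun a ha =>
    Subsemigroup.closure_le (S := (Subgroup.closure S).toSubmonoid.toSubsemigroup).mpr
      Subgroup.subset_closure (hcone ha)
  refine eq_top_iff.mpr fun a _ => ?_
  rcases lt_trichotomy a 1 with ha | rfl | ha
  · simpa using inv_mem (hpos _ (Left.one_lt_inv_iff.mpr ha))
  · exact one_mem _
  · exact hpos a ha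

end LeftOrdered

section StandardFactorization

variable {X H : Type*} [Group X] [Group H] [Preorder H] (PX : Subsemigroup X) (ιH : H →* X)
  (z : H)

structure IsStandardBlocks {l : ℕ} (p : Fin l → X) (q : Fin l → H) : Prop where
  mem : ∀ i, p i ∈ PX
  one_lt : ∀ i : Fin l, (i : ℕ) + 1 ≠ l → 1 < q i
  one_le : ∀ i : Fin l, (i : ℕ) + 1 = l → 1 ≤ q i
  ne_pow : ∀ (i : Fin l) (N : ℕ), 0 < N → q i ≠ z ^ N

def HasStandardFactorization (y : X) : Prop :=
  ∃ (l : ℕ) (r : H) (p : Fin l → X) (q : Fin l → H),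
    IsStandardBlocks PX z p q ∧ y = ιH r * (List.ofFn fun i => p i * ιH (q i)).prod

variable {PX ιH z}

theorem isStandardBlocks_single {p₀ : X} (hp₀ : p₀ ∈ PX) (hz : ¬IsOfFinOrder z) :
    IsStandardBlocks PX z (fun _ : Fin 1 => p₀) (fun _ => 1) where
  mem _ := hp₀
  one_lt i hi := absurd (by simp [Fin.fin_one_eq_zero i]) hi
  one_le _ _ := le_rfl
  ne_pow _ N hN h := hz (isOfFinOrder_iff_pow_eq_one.mpr ⟨N, hN, h.symm⟩)

theorem IsStandardBlocks.cons {l : ℕ} {p : Fin l → X} {q : Fin l → H}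
    (h : IsStandardBlocks PX z p q) {p₀ : X} {q₀ : H} (hp₀ : p₀ ∈ PX) (hq₀ : 1 < q₀)
    (hq₀z : ∀ N : ℕ, 0 < N → q₀ ≠ z ^ N) :
    IsStandardBlocks PX z (Fin.cons p₀ p : Fin (l + 1) → X) (Fin.cons q₀ q) where
  mem := Fin.cases hp₀ h.mem
  one_lt := Fin.cases (fun _ => hq₀) fun i hi => h.one_lt i (by simpa using hi)
  one_le := Fin.cases (fun _ => hq₀.le) fun i hi => h.one_le i (by simpa using hi)
  ne_pow := Fin.cases hq₀z h.ne_pow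

theorem IsStandardBlocks.update {l : ℕ} {p : Fin l → X} {q : Fin l → H}
    (h : IsStandardBlocks PX z p q) (i : Fin l) {p₀ : X} (hp₀ : p₀ ∈ PX) :
    IsStandardBlocks PX z (Function.update p i p₀) q where
  mem := Function.forall_update_iff p (p := fun _ y => y ∈ PX) |>.mpr ⟨hp₀, fun j _ => h.mem j⟩
  one_lt := h.one_lt
  one_le := h.one_le
  ne_pow := h.ne_pow

theorem hasStandardFactorization_one : HasStandardFactorization PX ιH z 1 :=
  ⟨0, 1, Fin.elim0, Fin.elim0,
    ⟨fun i => i.elim0, fun i => i.elim0, fun i => i.elim0, fun i => i.elim0⟩, by simp⟩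

theorem HasStandardFactorization.mul_left_map {y : X} (hy : HasStandardFactorization PX ιH z y)
    (a : H) : HasStandardFactorization PX ιH z (ιH a * y) := by
  obtain ⟨l, r, p, q, hb, rfl⟩ := hy
  exact ⟨l, a * r, p, q, hb, by rw [map_mul, mul_assoc]⟩

theorem HasStandardFactorization.mul_left_of_mem {y : X} (hy : HasStandardFactorization PX ιH z y)
    (hz : ¬IsOfFinOrder z) (hcof : ∀ u : H, ∃ k : ℕ, 1 < z ^ k * u) {p₀ : X} (hp₀ : p₀ ∈ PX)
    (hcomm : Commute (ιH z) p₀) : HasStandardFactorization PX ιH z (p₀ * y) := by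
  obtain ⟨l, r, p, q, hb, rfl⟩ := hy
  by_cases hr : ∃ t : ℤ, z ^ t = r
  · obtain ⟨t, rfl⟩ := hr
    have hpr : p₀ * ιH z ^ t = ιH z ^ t * p₀ := (hcomm.zpow_left t).eq.symm
    cases l with
    | zero =>
      exact ⟨1, z ^ t, fun _ => p₀, fun _ => 1, isStandardBlocks_single hp₀ hz, by simp [hpr]⟩
    | succ l =>
      refine ⟨l + 1, z ^ t, Function.update p 0 (p₀ * p 0), q,
        hb.update 0 (PX.mul_mem hp₀ (hb.mem 0)), ?_⟩
      simp [List.ofFn_succ, ← mul_assoc, hpr, Fin.succ_ne_zero]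
  · obtain ⟨k, hk⟩ := hcof r
    have hkr : ∀ N : ℕ, 0 < N → z ^ k * r ≠ z ^ N := by
      intro N _ hN
      refine hr ⟨-k + N, ?_⟩
      rw [zpow_add, zpow_neg, zpow_natCast, zpow_natCast, ← hN, inv_mul_cancel_left]
    refine ⟨l + 1, (z ^ k)⁻¹, Fin.cons p₀ p, Fin.cons (z ^ k * r) q, hb.cons hp₀ hk hkr, ?_⟩
    rw [List.ofFn_succ, List.prod_cons]
    simp only [Fin.cons_zero, Fin.cons_succ]
    rw [map_mul, map_inv, map_pow, ← mul_assoc p₀ (ιH z ^ k), ← (hcomm.pow_left k).eq]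
    group

end StandardFactorization

namespace IsAmalgamatedProduct

variable {G H X : Type} [Group G] [Group H] [Group X] {zG : G} {zH : H} {ιG : G →* X}
  {ιH : H →* X}

theorem eq_top_of_range_le (ham : IsAmalgamatedProduct zG zH ιG ιH) {K : Subgroup X}
    (hG : ∀ a, ιG a ∈ K) (hH : ∀ b, ιH b ∈ K) : K = ⊤ := by
  obtain ⟨φ, ⟨hφG, hφH⟩, -⟩ :=
    ham.ind (ιG.codRestrict K hG) (ιH.codRestrict K hH) (Subtype.ext ham.eq)
  obtain ⟨ψ, -, huniq⟩ := ham.ind ιG ιH ham.eq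
  have hφ : K.subtype.comp φ = MonoidHom.id X := by
    refine (huniq _ ⟨?_, ?_⟩).trans (huniq _ ⟨rfl, rfl⟩).symm
    · rw [MonoidHom.comp_assoc, hφG]; rfl
    · rw [MonoidHom.comp_assoc, hφH]; rfl
  refine eq_top_iff.mpr fun v _ => ?_
  simpa using congrArg (· ∈ K) (DFunLike.congr_fun hφ v) |>.mp (φ v).2

theorem closure_range_mul_eq_top (ham : IsAmalgamatedProduct zG zH ιG ιH) {ι : Type*}
    {g : ι → G} (hg : Subgroup.closure (Set.range g) = ⊤) (c : H) :
    Subgroup.closure (Set.range ιH ∪ Set.range fun i => ιG (g i) * ιH c) = ⊤ := by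
  set K := Subgroup.closure (Set.range ιH ∪ Set.range fun i => ιG (g i) * ιH c)
  have hH : ∀ b, ιH b ∈ K := fun b => Subgroup.subset_closure (Or.inl ⟨b, rfl⟩)
  have hgK : Subgroup.closure (Set.range g) ≤ K.comap ιG := by
    rw [Subgroup.closure_le]
    rintro _ ⟨i, rfl⟩
    simpa using mul_mem (Subgroup.subset_closure (Or.inr ⟨i, rfl⟩) : _ ∈ K) (hH c⁻¹)
  exact ham.eq_top_of_range_le (fun a => hgK (hg ▸ Subgroup.mem_top a)) hH

theorem commute_of_mem_closure (ham : IsAmalgamatedProduct zG zH ιG ιH) {ι : Type*}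
    {g : ι → G} {c : H} (hcen : ∀ i, Commute zG (g i)) (hc : Commute zH c) {p : X}
    (hp : p ∈ Subsemigroup.closure (Set.range fun i => ιG (g i) * ιH c)) :
    Commute (ιH zH) p := by
  induction hp using Subsemigroup.closure_induction with
  | mem _ hx =>
    obtain ⟨i, rfl⟩ := hx
    exact (ham.eq ▸ (hcen i).map ιG).mul_right (hc.map ιH)
  | mul _ _ _ _ ha hb => exact ha.mul_right hb

theorem hasStandardFactorization [Preorder H] (ham : IsAmalgamatedProduct zG zH ιG ιH)
    {ι : Type*} {g : ι → G} (hg : Subgroup.closure (Set.range g) = ⊤)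
    (hgz : ∀ i, zG * (g i)⁻¹ ∈ Subsemigroup.closure (Set.range g))
    (hcen : ∀ i, Commute zG (g i)) {c : H} (hc : Commute zH c) (hz : ¬IsOfFinOrder zH)
    (hcof : ∀ u : H, ∃ k : ℕ, 1 < zH ^ k * u) (y : X) :
    HasStandardFactorization (Subsemigroup.closure (Set.range fun i => ιG (g i) * ιH c)) ιH zH
      y := by
  set PX := Subsemigroup.closure (Set.range fun i => ιG (g i) * ιH c)
  have hx : ∀ i {w}, HasStandardFactorization PX ιH zH w →
      HasStandardFactorization PX ιH zH (ιG (g i) * ιH c * w) := fun i _ hw =>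
    have hxi : ιG (g i) * ιH c ∈ PX := Subsemigroup.subset_closure ⟨i, rfl⟩
    hw.mul_left_of_mem hz hcof hxi (ham.commute_of_mem_closure hcen hc hxi)
  have hG : ∀ a ∈ Subsemigroup.closure (Set.range g), ∀ {w},
      HasStandardFactorization PX ιH zH w → HasStandardFactorization PX ιH zH (ιG a * w) := by
    intro a ha
    induction ha using Subsemigroup.closure_induction with
    | mem _ hb =>
      obtain ⟨i, rfl⟩ := hb
      intro w hw
      simpa [mul_assoc] using hx i (hw.mul_left_map c⁻¹)
    | mul a b _ _ ha hb =>
      intro w hw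
      simpa [mul_assoc] using ha (hb hw)
  induction (ham.closure_range_mul_eq_top hg c).ge (Subgroup.mem_top y)
    using Subgroup.closure_induction_left with
  | one => exact hasStandardFactorization_one
  | mul_left s hs w _ hw =>
    obtain ⟨b, rfl⟩ | ⟨i, rfl⟩ := hs
    · exact hw.mul_left_map b
    · exact hx i hw
  | inv_mul_cancel s hs w _ hw =>
    obtain ⟨b, rfl⟩ | ⟨i, rfl⟩ := hs
    · simpa using hw.mul_left_map b⁻¹
    · have hinv : (ιG (g i) * ιH c)⁻¹ = ιH (c⁻¹ * zH⁻¹) * ιG (zG * (g i)⁻¹) := by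
        simp [ham.eq, mul_assoc]
      rw [hinv, mul_assoc]
      exact (hG _ (hgz i) hw).mul_left_map _

end IsAmalgamatedProduct

theorem standard_factorization_exists_general
    {G H X : Type} [Group G] [Group H] [Group X]
    [LinearOrder G] [LinearOrder H]
    (hG : ∀ a b c : G, a < b → c * a < c * b)
    (hH : ∀ a b c : H, a < b → c * a < c * b)
    (zG : G) (zH : H)
    (hcen : ∀ a : G, zG * a = a * zG)
    (m n : ℕ) (g : Fin (m + 1) → G) (h : Fin (n + 1) → H)
    (hhmono : StrictMono h)
    (hgcone : {a : G | 1 < a} = (Subsemigroup.closure (Set.range g) : Set G))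
    (hhcone : {a : H | 1 < a} = (Subsemigroup.closure (Set.range h) : Set H))
    (hCFG : ∀ i, g i < zG) (hCFH : ∀ j, h j < zH)
    (hINV : ∀ a b : H, a < b → a * zH < b * zH)
    (ιG : G →* X) (ιH : H →* X)
    (ham : IsAmalgamatedProduct zG zH ιG ιH)
    :
    let x : Fin (m + 1) → X := fun i => ιG (g i) * (ιH zH)⁻¹ * ιH (h 0)
    let PX : Subsemigroup X := Subsemigroup.closure (Set.range x)
    ∀ y : X, ∃ (l : ℕ) (r : H) (p : Fin l → X) (q : Fin l → H),
      (∀ i, p i ∈ PX) ∧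
      (∀ i : Fin l, (i : ℕ) + 1 ≠ l → 1 < q i) ∧
      (∀ i : Fin l, (i : ℕ) + 1 = l → 1 ≤ q i) ∧
      (∀ i : Fin l, ∀ N : ℕ, 0 < N → q i ≠ zH ^ N) ∧
      y = ιH r * (List.ofFn fun i => p i * ιH (q i)).prod := by
  intro x PX y
  have : MulLeftStrictMono G := ⟨fun c _ _ hab => hG _ _ c hab⟩
  have : MulLeftStrictMono H := ⟨fun c _ _ hab => hH _ _ c hab⟩
  have hh₀ : 1 < h 0 := hhcone.ge (Subsemigroup.subset_closure (Set.mem_range_self 0))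
  have hz₁ : 1 < zH := hh₀.trans (hCFH 0)
  have hmin : IsLeast {a | 1 < a} (h 0) := isLeast_one_lt_of_forall_le hhcone.le hh₀
    (Set.forall_mem_range.2 fun j => hhmono.monotone (Fin.zero_le j))
  have hzh : Commute zH (h 0) := commute_of_isLeast_one_lt hmin hINV
  have hgz : ∀ i, zG * (g i)⁻¹ ∈ Subsemigroup.closure (Set.range g) := fun i =>
    hgcone.le (by simpa [hcen] using mul_lt_mul_right (hCFG i) (g i)⁻¹)
  have hPX : PX = Subsemigroup.closure (Set.range fun i => ιG (g i) * ιH (zH⁻¹ * h 0)) := by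
    simp [PX, x, mul_assoc]
  obtain ⟨l, r, p, q, hb, hy⟩ := ham.hasStandardFactorization
    (Subgroup.closure_eq_top_of_one_lt_subset hgcone.le) hgz (fun i => hcen (g i))
    ((Commute.refl zH).inv_right.mul_right hzh) (not_isOfFinOrder_of_one_lt hz₁)
    (exists_one_lt_pow_mul (exists_lt_pow_of_forall_lt hhcone.le (Set.forall_mem_range.2 hCFH)
      hINV hz₁) hINV) y
  rw [← hPX] at hb
  exact ⟨l, r, p, q, hb.mem, hb.one_lt, hb.one_le, hb.ne_pow, hy⟩

theorem standard_factorization_exists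
    {G H X : Type} [Group G] [Group H] [Group X]
    [LinearOrder G] [LinearOrder H]
    (hG : ∀ a b c : G, a < b → c * a < c * b)
    (hH : ∀ a b c : H, a < b → c * a < c * b)
    (zG : G) (zH : H) (hzG : zG ≠ 1) (hzH : zH ≠ 1)
    (hcen : ∀ a : G, zG * a = a * zG)
    (m n : ℕ) (g : Fin (m + 1) → G) (h : Fin (n + 1) → H)
    (hgmono : StrictMono g) (hhmono : StrictMono h)
    (hgcone : {a : G | 1 < a} = (Subsemigroup.closure (Set.range g) : Set G))
    (hhcone : {a : H | 1 < a} = (Subsemigroup.closure (Set.range h) : Set H))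
    (hCFG : ∀ i, g i < zG) (hCFH : ∀ j, h j < zH)
    (hINV : ∀ a b : H, a < b → a * zH < b * zH)
    (ιG : G →* X) (ιH : H →* X)
    (ham : IsAmalgamatedProduct zG zH ιG ιH)
    :
    let x : Fin (m + 1) → X := fun i => ιG (g i) * (ιH zH)⁻¹ * ιH (h 0)
    let PX : Subsemigroup X := Subsemigroup.closure (Set.range x)
    ∀ y : X, ∃ (l : ℕ) (r : H) (p : Fin l → X) (q : Fin l → H),
      (∀ i, p i ∈ PX) ∧
      (∀ i : Fin l, (i : ℕ) + 1 ≠ l → 1 < q i) ∧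
      (∀ i : Fin l, (i : ℕ) + 1 = l → 1 ≤ q i) ∧
      (∀ i : Fin l, ∀ N : ℕ, 0 < N → q i ≠ zH ^ N) ∧
      y = ιH r * (List.ofFn fun i => p i * ιH (q i)).prod :=
  standard_factorization_exists_general hG hH zG zH hcen m n g h hhmono hgcone hhcone hCFG hCFH hINV
    ιG ιH ham
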